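/- Let Φ ∈ S₂(E, E_*) and ℋ its de Branges–Rovnyak model. As Hilbert spaces, ℋ equals the operator range of [[I, 0],[Φ*, Δ]] and also the operator range of [[Δ_*, Φ],[0, I]], where Δ = (I − Φ*Φ)^{1/2} and Δ_* = (I − ΦΦ*)^{1/2}. Consequently, ℋ = {(f, g) : f ∈ L²(E_*), g ∈ L²(E), g − Φ*f ∈ Δ L²(E)} = {(f, g) : f ∈ L²(E_*), g ∈ L²(E), f − Φg ∈ Δ_* L²(E_*)} as sets. -/

import Mathlib

/- STATEMENT 6: Let Φ ∈ S₂(E,E_*) and ℋ its de Branges–Rovnyak model, the operator range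
of S = [[I,Φ],[Φ*,I]]^{1/2}.  With Δ = (I − Φ*Φ)^{1/2}, Δ_* = (I − ΦΦ*)^{1/2}, ℋ equals,
as a Hilbert space, the operator range of A₁ = [[I,0],[Φ*,Δ]] and of A₂ = [[Δ_*,Φ],[0,I]];
consequently, as sets,
ℋ = {(f,g) : g − Φ*f ∈ Δ L²(E)} = {(f,g) : f − Φg ∈ Δ_* L²(E_*)}.

Equality as Hilbert spaces: equality of the ranges together with equality of the
operator-range norms on them (encoded via ipS, ipA1, ipA2). -/

open scoped ComplexInnerProductSpace

noncomputable def c1 {A B : Type*} [NormedAddCommGroup A] [NormedAddCommGroup B]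
    (x : WithLp 2 (A × B)) : A := (WithLp.equiv 2 (A × B) x).1

noncomputable def c2 {A B : Type*} [NormedAddCommGroup A] [NormedAddCommGroup B]
    (x : WithLp 2 (A × B)) : B := (WithLp.equiv 2 (A × B) x).2

noncomputable def pr {A B : Type*} [NormedAddCommGroup A] [NormedAddCommGroup B]
    (f : A) (g : B) : WithLp 2 (A × B) := (WithLp.equiv 2 (A × B)).symm (f, g)

/-! Since `Δ² = I − Φ*Φ` and `Δ_*² = I − ΦΦ*`, multiplying out the blocks gives
`A₁A₁* = A₂A₂* = [[I,Φ],[Φ*,I]] = SS*`. Douglas' lemma then does the rest: if `SS* = AA*`, then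
`‖S*u‖ = ‖A*u‖`, so `S*u ↦ A*u` extends to an isometry from `closure (range S*) = (ker S)ᗮ` onto
`(ker A)ᗮ` which intertwines `S` and `A`. It maps the minimal preimage of `z` under `S` to the
minimal preimage under `A`, so `S` and `A` have the same range with the same range norm. The
descriptions as sets are the ranges of the triangular `A₁`, `A₂`, read off directly. -/

namespace ContinuousLinearMap

theorem exists_mem_orthogonal_ker_apply_eq {𝕜 E F : Type*} [RCLike 𝕜]
    [NormedAddCommGroup E] [InnerProductSpace 𝕜 E] [CompleteSpace E] [AddCommGroup F] [Module 𝕜 F]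
    [TopologicalSpace F] [T1Space F]
    (T : E →L[𝕜] F) (w : E) :
    ∃ x ∈ (LinearMap.ker (T : E →ₗ[𝕜] F))ᗮ, T x = T w := by
  have : CompleteSpace (LinearMap.ker (T : E →ₗ[𝕜] F)) := T.isClosed_ker.completeSpace_coe
  obtain ⟨k, hk, x, hx, rfl⟩ := (LinearMap.ker (T : E →ₗ[𝕜] F)).exists_add_mem_mem_orthogonal w
  exact ⟨x, hx, by rw [map_add, show T k = 0 from hk, zero_add]⟩

variable {𝕜 E F H : Type*} [RCLike 𝕜]
  [NormedAddCommGroup E] [InnerProductSpace 𝕜 E] [CompleteSpace E]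
  [NormedAddCommGroup F] [InnerProductSpace 𝕜 F] [CompleteSpace F]
  [NormedAddCommGroup H] [InnerProductSpace 𝕜 H] [CompleteSpace H]
  {S : E →L[𝕜] H} {A : F →L[𝕜] H}

theorem norm_adjoint_apply_eq_of_comp_adjoint_eq (h : S ∘L adjoint S = A ∘L adjoint A) (u : H) :
    ‖adjoint S u‖ = ‖adjoint A u‖ := by
  have hsq : ‖adjoint S u‖ ^ 2 = ‖adjoint A u‖ ^ 2 := by
    rw [apply_norm_sq_eq_inner_adjoint_left, apply_norm_sq_eq_inner_adjoint_left,
      adjoint_adjoint, adjoint_adjoint, h]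
  exact (pow_left_inj₀ (norm_nonneg _) (norm_nonneg _) two_ne_zero).mp hsq

theorem mem_orthogonal_ker_iff_mem_closure_range_adjoint (T : E →L[𝕜] H) (x : E) :
    x ∈ (LinearMap.ker (T : E →ₗ[𝕜] H))ᗮ ↔ x ∈ closure (Set.range (adjoint T)) := by
  rw [← SetLike.mem_coe, orthogonal_ker T, Submodule.topologicalClosure_coe]
  rfl

theorem exists_mem_orthogonal_ker_apply_eq_of_comp_adjoint_eq
    (h : S ∘L adjoint S = A ∘L adjoint A) {x : E} (hx : x ∈ (LinearMap.ker (S : E →ₗ[𝕜] H))ᗮ) :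
    ∃ y ∈ (LinearMap.ker (A : F →ₗ[𝕜] H))ᗮ, A y = S x ∧ ‖y‖ = ‖x‖ := by
  obtain ⟨v, hv, hvx⟩ := mem_closure_iff_seq_limit.mp
    ((mem_orthogonal_ker_iff_mem_closure_range_adjoint S x).mp hx)
  choose u hu using hv
  obtain rfl : v = fun n ↦ adjoint S (u n) := funext fun n ↦ (hu n).symm
  have hdist (m n : ℕ) :
      dist (adjoint A (u m)) (adjoint A (u n)) = dist (adjoint S (u m)) (adjoint S (u n)) := by
    rw [dist_eq_norm, dist_eq_norm, ← map_sub, ← map_sub,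
      norm_adjoint_apply_eq_of_comp_adjoint_eq h]
  have hcauchy : CauchySeq fun n ↦ adjoint A (u n) :=
    Metric.cauchySeq_iff.mpr fun ε hε ↦ (Metric.cauchySeq_iff.mp hvx.cauchySeq ε hε).imp
      fun _ hN m hm n hn ↦ hdist m n ▸ hN m hm n hn
  obtain ⟨y, hy⟩ := cauchySeq_tendsto_of_complete hcauchy
  refine ⟨y, (mem_orthogonal_ker_iff_mem_closure_range_adjoint A y).mpr
    (mem_closure_of_tendsto hy (.of_forall fun n ↦ Set.mem_range_self _)), ?_, ?_⟩
  · have hAA : Filter.Tendsto (fun n ↦ (A ∘L adjoint A) (u n)) Filter.atTop (nhds (S x)) := by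
      rw [← h]; exact (S.continuous.tendsto x).comp hvx
    exact tendsto_nhds_unique ((A.continuous.tendsto y).comp hy) hAA
  · have hnorm : Filter.Tendsto (fun n ↦ ‖adjoint S (u n)‖) Filter.atTop (nhds ‖y‖) := by
      simpa only [norm_adjoint_apply_eq_of_comp_adjoint_eq h] using hy.norm
    exact tendsto_nhds_unique hnorm hvx.norm

theorem range_subset_range_of_comp_adjoint_eq (h : S ∘L adjoint S = A ∘L adjoint A) :
    Set.range S ⊆ Set.range A := by
  rintro _ ⟨w, rfl⟩
  obtain ⟨x, hx, hxw⟩ := exists_mem_orthogonal_ker_apply_eq S w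
  obtain ⟨y, -, hy, -⟩ := exists_mem_orthogonal_ker_apply_eq_of_comp_adjoint_eq h hx
  exact ⟨y, hy.trans hxw⟩

theorem range_eq_range_of_comp_adjoint_eq (h : S ∘L adjoint S = A ∘L adjoint A) :
    Set.range S = Set.range A :=
  (range_subset_range_of_comp_adjoint_eq h).antisymm (range_subset_range_of_comp_adjoint_eq h.symm)

def IsOperatorRangeInner (T : E →L[𝕜] H) (ip : H → H → 𝕜) : Prop :=
  ∀ x y, x ∈ (LinearMap.ker (T : E →ₗ[𝕜] H))ᗮ → ip (T x) (T y) = inner 𝕜 x y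

theorem IsOperatorRangeInner.apply_self_eq_of_comp_adjoint_eq {ipS ipA : H → H → 𝕜}
    (hipS : IsOperatorRangeInner S ipS) (hipA : IsOperatorRangeInner A ipA)
    (h : S ∘L adjoint S = A ∘L adjoint A) {z : H} (hz : z ∈ Set.range S) :
    ipS z z = ipA z z := by
  obtain ⟨w, rfl⟩ := hz
  obtain ⟨x, hx, hxw⟩ := exists_mem_orthogonal_ker_apply_eq S w
  obtain ⟨y, hy, hyx, hnorm⟩ := exists_mem_orthogonal_ker_apply_eq_of_comp_adjoint_eq h hx
  calc ipS (S w) (S w) = inner 𝕜 x x := by rw [← hxw, hipS x x hx]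
    _ = inner 𝕜 y y := by rw [inner_self_eq_norm_sq_to_K, inner_self_eq_norm_sq_to_K, hnorm]
    _ = ipA (S w) (S w) := by rw [← hxw, ← hyx, hipA y y hy]

end ContinuousLinearMap

section BlockOperator

variable {A B C : Type*} [NormedAddCommGroup A] [NormedAddCommGroup B] [NormedAddCommGroup C]

theorem pr_c1_c2 (x : WithLp 2 (A × B)) : pr (c1 x) (c2 x) = x := rfl

theorem range_eq_of_apply_pr_lower {T : WithLp 2 (A × C) → WithLp 2 (A × B)} {c : A → B}
    {d : C → B} (hT : ∀ f g, T (pr f g) = pr f (c f + d g)) :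
    Set.range T = {p | c2 p - c (c1 p) ∈ Set.range d} := by
  ext p
  constructor
  · rintro ⟨w, rfl⟩
    rw [← pr_c1_c2 w, hT]
    exact ⟨c2 w, (add_sub_cancel_left _ _).symm⟩
  · rintro ⟨g, hg⟩
    exact ⟨pr (c1 p) g, by rw [hT, hg, add_sub_cancel]; rfl⟩

theorem range_eq_of_apply_pr_upper {T : WithLp 2 (C × B) → WithLp 2 (A × B)} {a : C → A}
    {b : B → A} (hT : ∀ f g, T (pr f g) = pr (a f + b g) g) :
    Set.range T = {p | c1 p - b (c2 p) ∈ Set.range a} := by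
  ext p
  constructor
  · rintro ⟨w, rfl⟩
    rw [← pr_c1_c2 w, hT]
    exact ⟨c1 w, (add_sub_cancel_right _ _).symm⟩
  · rintro ⟨f, hf⟩
    exact ⟨pr f (c2 p), by rw [hT, hf, sub_add_cancel]; rfl⟩

end BlockOperator

section BlockAdjoint

variable {𝕜 E₁ E₂ F₁ F₂ : Type*} [RCLike 𝕜]
  [NormedAddCommGroup E₁] [InnerProductSpace 𝕜 E₁] [NormedAddCommGroup E₂] [InnerProductSpace 𝕜 E₂]
  [NormedAddCommGroup F₁] [InnerProductSpace 𝕜 F₁] [NormedAddCommGroup F₂] [InnerProductSpace 𝕜 F₂]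

theorem inner_pr_pr (f f' : E₁) (g g' : E₂) :
    inner 𝕜 (pr f g) (pr f' g') = inner 𝕜 f f' + inner 𝕜 g g' := rfl

theorem ContinuousLinearMap.ext_pr {T U : WithLp 2 (E₁ × E₂) →L[𝕜] WithLp 2 (F₁ × F₂)}
    (h : ∀ f g, T (pr f g) = U (pr f g)) : T = U :=
  ext fun x ↦ h (c1 x) (c2 x)

variable [CompleteSpace E₁] [CompleteSpace E₂] [CompleteSpace F₁] [CompleteSpace F₂]

open ContinuousLinearMap

theorem adjoint_apply_pr_of_apply_pr {T : WithLp 2 (E₁ × E₂) →L[𝕜] WithLp 2 (F₁ × F₂)}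
    {a : E₁ →L[𝕜] F₁} {b : E₂ →L[𝕜] F₁} {c : E₁ →L[𝕜] F₂} {d : E₂ →L[𝕜] F₂}
    (hT : ∀ f g, T (pr f g) = pr (a f + b g) (c f + d g)) (f : F₁) (g : F₂) :
    adjoint T (pr f g) = pr (adjoint a f + adjoint c g) (adjoint b f + adjoint d g) := by
  refine ext_inner_right 𝕜 fun v ↦ ?_
  rw [adjoint_inner_left, ← pr_c1_c2 v, hT, inner_pr_pr, inner_pr_pr]
  simp only [inner_add_left, inner_add_right, adjoint_inner_left]
  ring

theorem comp_adjoint_eq_of_apply_pr_lower {T : WithLp 2 (F₁ × E₂) →L[𝕜] WithLp 2 (F₁ × F₂)}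
    {U : WithLp 2 (F₁ × F₂) →L[𝕜] WithLp 2 (F₁ × F₂)} {Φ : F₂ →L[𝕜] F₁} {Δ : E₂ →L[𝕜] F₂}
    (hΔ : Δ ∘L adjoint Δ = 1 - adjoint Φ ∘L Φ)
    (hT : ∀ f g, T (pr f g) = pr f (adjoint Φ f + Δ g))
    (hU : ∀ f g, U (pr f g) = pr (f + Φ g) (adjoint Φ f + g)) :
    T ∘L adjoint T = U := by
  have hT' (f : F₁) (g : E₂) :
      T (pr f g) = pr ((1 : F₁ →L[𝕜] F₁) f + (0 : E₂ →L[𝕜] F₁) g) (adjoint Φ f + Δ g) := by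
    simpa using hT f g
  have hΔ' (g : F₂) : Δ (adjoint Δ g) = g - adjoint Φ (Φ g) := by
    simpa using congr($hΔ g)
  refine ext_pr fun f g ↦ ?_
  simp only [comp_apply, adjoint_apply_pr_of_apply_pr hT', hT, hU, adjoint_one, adjoint_adjoint,
    one_apply_eq_self, zero_apply, map_zero, map_add, hΔ']
  congr 1
  abel

theorem comp_adjoint_eq_of_apply_pr_upper {T : WithLp 2 (E₁ × F₂) →L[𝕜] WithLp 2 (F₁ × F₂)}
    {U : WithLp 2 (F₁ × F₂) →L[𝕜] WithLp 2 (F₁ × F₂)} {Φ : F₂ →L[𝕜] F₁} {Δ : E₁ →L[𝕜] F₁}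
    (hΔ : Δ ∘L adjoint Δ = 1 - Φ ∘L adjoint Φ)
    (hT : ∀ f g, T (pr f g) = pr (Δ f + Φ g) g)
    (hU : ∀ f g, U (pr f g) = pr (f + Φ g) (adjoint Φ f + g)) :
    T ∘L adjoint T = U := by
  have hT' (f : E₁) (g : F₂) :
      T (pr f g) = pr (Δ f + Φ g) ((0 : E₁ →L[𝕜] F₂) f + (1 : F₂ →L[𝕜] F₂) g) := by
    simpa using hT f g
  have hΔ' (f : F₁) : Δ (adjoint Δ f) = f - Φ (adjoint Φ f) := by
    simpa using congr($hΔ f)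
  refine ext_pr fun f g ↦ ?_
  simp only [comp_apply, adjoint_apply_pr_of_apply_pr hT', hT, hU, adjoint_one,
    one_apply_eq_self, zero_apply, map_zero, map_add, hΔ']
  congr 1
  abel

end BlockAdjoint

theorem stmt_6_general {L2E L2Es : Type*}
    [NormedAddCommGroup L2E] [InnerProductSpace ℂ L2E] [CompleteSpace L2E]
    [NormedAddCommGroup L2Es] [InnerProductSpace ℂ L2Es] [CompleteSpace L2Es]
    (MΦ : L2E →L[ℂ] L2Es)
    -- S = [[I,Φ],[Φ*,I]]^{1/2}:
    (S : WithLp 2 (L2Es × L2E) →L[ℂ] WithLp 2 (L2Es × L2E))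
    (hS : IsSelfAdjoint S)
    (hS2 : ∀ (f : L2Es) (g : L2E),
      S (S (pr f g)) = pr (f + MΦ g) (ContinuousLinearMap.adjoint MΦ f + g))
    -- Δ = (I − Φ*Φ)^{1/2} on L²(E) and Δ_* = (I − ΦΦ*)^{1/2} on L²(E_*):
    (Δ : L2E →L[ℂ] L2E) (hΔ : IsSelfAdjoint Δ)
    (hΔ2 : Δ ∘L Δ = 1 - ContinuousLinearMap.adjoint MΦ ∘L MΦ)
    (Δs : L2Es →L[ℂ] L2Es) (hΔs : IsSelfAdjoint Δs)
    (hΔs2 : Δs ∘L Δs = 1 - MΦ ∘L ContinuousLinearMap.adjoint MΦ)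
    -- the block operators A₁ = [[I,0],[Φ*,Δ]] and A₂ = [[Δ_*,Φ],[0,I]]:
    (A1 A2 : WithLp 2 (L2Es × L2E) →L[ℂ] WithLp 2 (L2Es × L2E))
    (hA1 : ∀ (f : L2Es) (g : L2E),
      A1 (pr f g) = pr f (ContinuousLinearMap.adjoint MΦ f + Δ g))
    (hA2 : ∀ (f : L2Es) (g : L2E), A2 (pr f g) = pr (Δs f + MΦ g) g)
    -- the operator-range inner products:
    (ipS ipA1 ipA2 : WithLp 2 (L2Es × L2E) → WithLp 2 (L2Es × L2E) → ℂ)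
    (hipS : ∀ x y, x ∈ (LinearMap.ker (S : WithLp 2 (L2Es × L2E) →ₗ[ℂ] WithLp 2 (L2Es × L2E)))ᗮ → ipS (S x) (S y) = ⟪x, y⟫)
    (hipA1 : ∀ x y, x ∈ (LinearMap.ker (A1 : WithLp 2 (L2Es × L2E) →ₗ[ℂ] WithLp 2 (L2Es × L2E)))ᗮ → ipA1 (A1 x) (A1 y) = ⟪x, y⟫)
    (hipA2 : ∀ x y, x ∈ (LinearMap.ker (A2 : WithLp 2 (L2Es × L2E) →ₗ[ℂ] WithLp 2 (L2Es × L2E)))ᗮ → ipA2 (A2 x) (A2 y) = ⟪x, y⟫) :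
    -- ℋ = M(A₁) = M(A₂) as Hilbert spaces:
    Set.range S = Set.range A1 ∧ Set.range S = Set.range A2 ∧
      (∀ z ∈ Set.range S, ipS z z = ipA1 z z ∧ ipS z z = ipA2 z z) ∧
      -- and as sets:
      Set.range S = {p | c2 p - ContinuousLinearMap.adjoint MΦ (c1 p) ∈ Set.range Δ} ∧
      Set.range S = {p | c1 p - MΦ (c2 p) ∈ Set.range Δs} := by
  open ContinuousLinearMap in
  have hSS : ∀ f g, (S ∘L adjoint S) (pr f g) = pr (f + MΦ g) (adjoint MΦ f + g) := by
    simpa only [hS.adjoint_eq, comp_apply] using hS2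
  have h1 : S ∘L adjoint S = A1 ∘L adjoint A1 :=
    (comp_adjoint_eq_of_apply_pr_lower (by rwa [hΔ.adjoint_eq]) hA1 hSS).symm
  have h2 : S ∘L adjoint S = A2 ∘L adjoint A2 :=
    (comp_adjoint_eq_of_apply_pr_upper (by rwa [hΔs.adjoint_eq]) hA2 hSS).symm
  refine ⟨range_eq_range_of_comp_adjoint_eq h1, range_eq_range_of_comp_adjoint_eq h2,
    fun z hz ↦ ⟨IsOperatorRangeInner.apply_self_eq_of_comp_adjoint_eq hipS hipA1 h1 hz,
      IsOperatorRangeInner.apply_self_eq_of_comp_adjoint_eq hipS hipA2 h2 hz⟩, ?_, ?_⟩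
  · rw [range_eq_range_of_comp_adjoint_eq h1, range_eq_of_apply_pr_lower hA1]
  · rw [range_eq_range_of_comp_adjoint_eq h2, range_eq_of_apply_pr_upper hA2]

theorem stmt_6 {L2E L2Es : Type*}
    [NormedAddCommGroup L2E] [InnerProductSpace ℂ L2E] [CompleteSpace L2E]
    [NormedAddCommGroup L2Es] [InnerProductSpace ℂ L2Es] [CompleteSpace L2Es]
    (MΦ : L2E →L[ℂ] L2Es) (hMΦ : ‖MΦ‖ ≤ 1)
    -- S = [[I,Φ],[Φ*,I]]^{1/2}:
    (S : WithLp 2 (L2Es × L2E) →L[ℂ] WithLp 2 (L2Es × L2E))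
    (hS : IsSelfAdjoint S) (hSpos : ∀ x, 0 ≤ (⟪S x, x⟫).re)
    (hS2 : ∀ (f : L2Es) (g : L2E),
      S (S (pr f g)) = pr (f + MΦ g) (ContinuousLinearMap.adjoint MΦ f + g))
    -- Δ = (I − Φ*Φ)^{1/2} on L²(E) and Δ_* = (I − ΦΦ*)^{1/2} on L²(E_*):
    (Δ : L2E →L[ℂ] L2E) (hΔ : IsSelfAdjoint Δ) (hΔpos : ∀ g, 0 ≤ (⟪Δ g, g⟫).re)
    (hΔ2 : Δ ∘L Δ = 1 - ContinuousLinearMap.adjoint MΦ ∘L MΦ)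
    (Δs : L2Es →L[ℂ] L2Es) (hΔs : IsSelfAdjoint Δs) (hΔspos : ∀ f, 0 ≤ (⟪Δs f, f⟫).re)
    (hΔs2 : Δs ∘L Δs = 1 - MΦ ∘L ContinuousLinearMap.adjoint MΦ)
    -- the block operators A₁ = [[I,0],[Φ*,Δ]] and A₂ = [[Δ_*,Φ],[0,I]]:
    (A1 A2 : WithLp 2 (L2Es × L2E) →L[ℂ] WithLp 2 (L2Es × L2E))
    (hA1 : ∀ (f : L2Es) (g : L2E),
      A1 (pr f g) = pr f (ContinuousLinearMap.adjoint MΦ f + Δ g))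
    (hA2 : ∀ (f : L2Es) (g : L2E), A2 (pr f g) = pr (Δs f + MΦ g) g)
    -- the operator-range inner products:
    (ipS ipA1 ipA2 : WithLp 2 (L2Es × L2E) → WithLp 2 (L2Es × L2E) → ℂ)
    (hipS : ∀ x y, x ∈ (LinearMap.ker (S : WithLp 2 (L2Es × L2E) →ₗ[ℂ] WithLp 2 (L2Es × L2E)))ᗮ → ipS (S x) (S y) = ⟪x, y⟫)
    (hipA1 : ∀ x y, x ∈ (LinearMap.ker (A1 : WithLp 2 (L2Es × L2E) →ₗ[ℂ] WithLp 2 (L2Es × L2E)))ᗮ → ipA1 (A1 x) (A1 y) = ⟪x, y⟫)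
    (hipA2 : ∀ x y, x ∈ (LinearMap.ker (A2 : WithLp 2 (L2Es × L2E) →ₗ[ℂ] WithLp 2 (L2Es × L2E)))ᗮ → ipA2 (A2 x) (A2 y) = ⟪x, y⟫) :
    -- ℋ = M(A₁) = M(A₂) as Hilbert spaces:
    Set.range S = Set.range A1 ∧ Set.range S = Set.range A2 ∧
      (∀ z ∈ Set.range S, ipS z z = ipA1 z z ∧ ipS z z = ipA2 z z) ∧
      -- and as sets:
      Set.range S = {p | c2 p - ContinuousLinearMap.adjoint MΦ (c1 p) ∈ Set.range Δ} ∧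
      Set.range S = {p | c1 p - MΦ (c2 p) ∈ Set.range Δs} :=
  stmt_6_general MΦ S hS hS2 Δ hΔ hΔ2 Δs hΔs hΔs2 A1 A2 hA1 hA2 ipS ipA1 ipA2 hipS hipA1 hipA2
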